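/- arXiv:2007.07314 — 10 statements merged into one kernel-verified Lean document; each statement's English description precedes it below -/
import Mathlib

section
/- Let X and Y = {1,...,L} be finite nonempty sets and let P be a probability mass function on X × Y whose class marginals π_y = Σ_{x∈X} P(x,y) are all strictly positive. For a classifier h : X → Y define the balanced error BER(h) = (1/L)·Σ_{y∈Y} Σ_{x : h(x) ≠ y} P(x,y)/π_y. Then any classifier h* satisfying h*(x) ∈ argmax_{y∈Y} P(x,y)/π_y for every x ∈ X minimizes BER over all classifiers h : X → Y. -/
/-- Any classifier that pointwise maximises `P x y / π y` minimises the balanced error. -/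
theorem bayes_optimal_balanced_error
    {X : Type*} [Fintype X] [Nonempty X] (L : ℕ) (hL : 1 ≤ L)
    (P : X → Fin L → ℝ)
    (hP : ∀ x y, 0 ≤ P x y)
    (hPsum : ∑ x : X, ∑ y : Fin L, P x y = 1)
    (π : Fin L → ℝ)
    (hπ : ∀ y, π y = ∑ x : X, P x y)
    (hπpos : ∀ y, 0 < π y)
    (BER : (X → Fin L) → ℝ)
    (hBER : ∀ h : X → Fin L,
      BER h = (1 / (L : ℝ)) *
        ∑ y : Fin L, ∑ x ∈ Finset.univ.filter (fun x : X => h x ≠ y), P x y / π y)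
    (hstar : X → Fin L)
    (hopt : ∀ x : X, ∀ y : Fin L, P x y / π y ≤ P x (hstar x) / π (hstar x)) :
    ∀ h : X → Fin L, BER hstar ≤ BER h := by
  intro h
  have key : ∀ g : X → Fin L,
      ∑ y : Fin L, ∑ x ∈ Finset.univ.filter (fun x : X => g x ≠ y), P x y / π y
        = (∑ y : Fin L, ∑ x : X, P x y / π y) - ∑ x : X, P x (g x) / π (g x) := by
    intro g
    have h1 : ∀ y : Fin L,
        ∑ x ∈ Finset.univ.filter (fun x : X => g x ≠ y), P x y / π y
          = (∑ x : X, P x y / π y)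
            - ∑ x ∈ Finset.univ.filter (fun x : X => g x = y), P x y / π y := by
      intro y
      rw [eq_sub_iff_add_eq, add_comm,
        Finset.sum_filter_add_sum_filter_not Finset.univ (fun x : X => g x = y)]
    have h2 : ∑ y : Fin L, ∑ x ∈ Finset.univ.filter (fun x : X => g x = y), P x y / π y
        = ∑ x : X, P x (g x) / π (g x) := by
      rw [← Finset.sum_fiberwise (Finset.univ) g (fun x => P x (g x) / π (g x))]
      refine Finset.sum_congr rfl fun y _ => Finset.sum_congr rfl fun x hx => ?_
      simp only [Finset.mem_filter] at hx
      rw [hx.2]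
    simp_rw [h1, Finset.sum_sub_distrib, h2]
  rw [hBER, hBER, key, key]
  apply mul_le_mul_of_nonneg_left _ (by positivity)
  apply sub_le_sub_left
  exact Finset.sum_le_sum fun x _ => hopt x (h x)
end

section
/- There exist real numbers v_1, v_2 and strictly positive reals π_1, π_2 with π_1 + π_2 = 1 such that v_1/π_1 < v_2/π_2 but exp(v_1)/π_1 > exp(v_2)/π_2. Hence neither of the orderings 'v_y/π_y increasing in y' and 'exp(v_y)/π_y increasing in y' implies the other: multiplicative (weight-normalisation) and additive (logit-adjustment) post-hoc corrections can produce different label orderings. -/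
/-- Multiplicative (weight normalisation) and additive (logit adjustment) post-hoc
corrections can produce different label orderings. -/
theorem weight_norm_logit_adjust_different_orderings :
    ∃ (v₁ v₂ π₁ π₂ : ℝ), 0 < π₁ ∧ 0 < π₂ ∧ π₁ + π₂ = 1 ∧
      v₁ / π₁ < v₂ / π₂ ∧ Real.exp v₂ / π₂ < Real.exp v₁ / π₁ := by
  refine ⟨0, 1, 0.1, 0.9, by norm_num, by norm_num, by norm_num, by norm_num, ?_⟩
  have h := Real.exp_one_lt_d9
  rw [Real.exp_zero]
  rw [div_lt_div_iff₀ (by norm_num) (by norm_num)]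
  nlinarith
end

section
/- (Theorem 1, pointwise Fisher consistency.) Fix L ≥ 2, strictly positive class priors π_1,...,π_L, strictly positive reals δ_1,...,δ_L, and conditional class-probabilities η ∈ ℝ^L with η_y > 0 for all y and Σ_y η_y = 1. Consider the pairwise margin loss with weights α_y = δ_y/π_y and margins Δ_{y y'} = log(δ_{y'}/δ_y), and its conditional risk C(f) = Σ_y η_y · α_y · log( 1 + Σ_{y'≠y} exp(Δ_{y y'})·exp(f_{y'} − f_y) ). Then C attains its minimum over ℝ^L, and every minimizer f* satisfies f*_y − f*_{y'} = log(η_y/π_y) − log(η_{y'}/π_{y'}) for all y, y'; in particular the maximizers of y ↦ f*_y coincide with the maximizers of y ↦ η_y/π_y, the Bayes-optimal prediction for the balanced error. -/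
/-!
Writing `z_y = log δ_y + f_y`, the `y`-th loss term is `(δ_y / π_y) · (log ∑ exp z − z_y)`, so
`C(f)` is the cross-entropy of the weights `w_y = η_y δ_y / π_y` against `softmax z`. By Gibbs'
inequality this is minimal exactly when `softmax z` is `w` normalized, i.e. when
`z = log w + c` for a constant `c`; equivalently `f = log (η / π) + c`.
-/

open Finset

section

open Real

theorem mul_log_sub_mul_log_lt {w q : ℝ} (hw : 0 < w) (hq : 0 < q) (hne : q ≠ w) :
    w * log q - w * log w < q - w := by
  have h := log_lt_sub_one_of_pos (div_pos hq hw) (div_ne_one_of_ne hne)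
  rw [log_div hq.ne' hw.ne'] at h
  calc w * log q - w * log w = w * (log q - log w) := by ring
    _ < w * (q / w - 1) := by gcongr
    _ = q - w := by field_simp

theorem mul_log_sub_mul_log_le {w q : ℝ} (hw : 0 < w) (hq : 0 < q) :
    w * log q - w * log w ≤ q - w := by
  rcases eq_or_ne q w with rfl | hne
  · simp
  · exact (mul_log_sub_mul_log_lt hw hq hne).le

variable {ι : Type*} [Fintype ι]

/-- Gibbs' inequality, strict form. -/
theorem sum_mul_log_lt_sum_mul_log {w q : ι → ℝ} (hw : ∀ i, 0 < w i) (hq : ∀ i, 0 < q i)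
    (hsum : ∑ i, q i = ∑ i, w i) (hne : q ≠ w) :
    ∑ i, w i * log (q i) < ∑ i, w i * log (w i) := by
  obtain ⟨i, hi⟩ := Function.ne_iff.mp hne
  have h := sum_lt_sum (fun j _ => mul_log_sub_mul_log_le (hw j) (hq j))
    ⟨i, mem_univ i, mul_log_sub_mul_log_lt (hw i) (hq i) hi⟩
  rw [sum_sub_distrib, sum_sub_distrib, hsum, sub_self] at h
  linarith

noncomputable def softmaxCrossEntropy (w z : ι → ℝ) : ℝ :=
  ∑ i, w i * (log (∑ j, exp (z j)) - z i)

theorem softmaxCrossEntropy_of_sum_exp_eq {w z : ι → ℝ} (h : ∑ j, exp (z j) = ∑ j, w j) :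
    softmaxCrossEntropy w z = (∑ i, w i) * log (∑ i, w i) - ∑ i, w i * z i := by
  simp only [softmaxCrossEntropy, h, mul_sub, sum_sub_distrib, sum_mul]

theorem log_one_add_sum_erase_exp_sub [DecidableEq ι] (z : ι → ℝ) (i : ι) :
    log (1 + ∑ j ∈ univ.erase i, exp (z j - z i)) = log (∑ j, exp (z j)) - z i := by
  have h : 1 + ∑ j ∈ univ.erase i, exp (z j - z i) = (∑ j, exp (z j)) * exp (-z i) := by
    rw [sum_mul, ← add_sum_erase _ _ (mem_univ i)]
    simp only [← exp_add, ← sub_eq_add_neg, sub_self, exp_zero]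
  rw [h, log_mul (sum_pos (fun j _ => exp_pos _) ⟨i, mem_univ i⟩).ne' (exp_pos _).ne', log_exp]
  ring

variable [Nonempty ι]

theorem softmaxCrossEntropy_add_const (w z : ι → ℝ) (c : ℝ) :
    softmaxCrossEntropy w (fun i => z i + c) = softmaxCrossEntropy w z := by
  have hpos : 0 < ∑ j, exp (z j) := sum_pos (fun j _ => exp_pos _) univ_nonempty
  simp only [softmaxCrossEntropy, exp_add, ← sum_mul, log_mul hpos.ne' (exp_pos c).ne', log_exp]
  exact sum_congr rfl fun i _ => by ring

theorem exists_sum_exp_add_eq (z : ι → ℝ) {W : ℝ} (hW : 0 < W) :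
    ∃ c, ∑ i, exp (z i + c) = W := by
  have hpos : 0 < ∑ j, exp (z j) := sum_pos (fun j _ => exp_pos _) univ_nonempty
  refine ⟨log W - log (∑ j, exp (z j)), ?_⟩
  simp only [exp_add, ← sum_mul, exp_sub, exp_log hW, exp_log hpos]
  field_simp

theorem softmaxCrossEntropy_log_lt {w z : ι → ℝ} (hw : ∀ i, 0 < w i)
    (hz : ∀ c, z ≠ fun i => log (w i) + c) :
    softmaxCrossEntropy w (fun i => log (w i)) < softmaxCrossEntropy w z := by
  obtain ⟨c, hc⟩ := exists_sum_exp_add_eq z (sum_pos (fun i _ => hw i) univ_nonempty)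
  have hne : (fun i => exp (z i + c)) ≠ w := fun h =>
    hz (-c) (funext fun i => by rw [← congrFun h i, log_exp]; ring)
  have h := sum_mul_log_lt_sum_mul_log hw (fun i => exp_pos _) hc hne
  simp only [log_exp] at h
  rw [← softmaxCrossEntropy_add_const w z c, softmaxCrossEntropy_of_sum_exp_eq hc,
    softmaxCrossEntropy_of_sum_exp_eq (by simp only [exp_log (hw _)])]
  linarith

theorem softmaxCrossEntropy_log_le {w : ι → ℝ} (hw : ∀ i, 0 < w i) (z : ι → ℝ) :
    softmaxCrossEntropy w (fun i => log (w i)) ≤ softmaxCrossEntropy w z := by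
  by_cases hz : ∃ c, z = fun i => log (w i) + c
  · obtain ⟨c, rfl⟩ := hz
    rw [softmaxCrossEntropy_add_const]
  · exact (softmaxCrossEntropy_log_lt hw (not_exists.mp hz)).le

theorem exists_eq_log_add_of_softmaxCrossEntropy_le {w z : ι → ℝ} (hw : ∀ i, 0 < w i)
    (h : softmaxCrossEntropy w z ≤ softmaxCrossEntropy w (fun i => log (w i))) :
    ∃ c, ∀ i, z i = log (w i) + c := by
  by_contra hz
  exact (softmaxCrossEntropy_log_lt hw fun c hc => hz ⟨c, fun i => by rw [hc]⟩).not_ge h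

end

theorem pairwise_margin_loss_fisher_consistent_general
    (L : ℕ) (hL : 2 ≤ L)
    (π : Fin L → ℝ) (hπ : ∀ y, 0 < π y)
    (δ : Fin L → ℝ) (hδ : ∀ y, 0 < δ y)
    (η : Fin L → ℝ) (hη : ∀ y, 0 < η y)
    (C : (Fin L → ℝ) → ℝ)
    (hC : ∀ f : Fin L → ℝ,
      C f = ∑ y : Fin L, η y * ((δ y / π y) *
        Real.log (1 + ∑ y' ∈ Finset.univ.erase y,
          Real.exp (Real.log (δ y' / δ y)) * Real.exp (f y' - f y)))) :
    (∃ f : Fin L → ℝ, ∀ g : Fin L → ℝ, C f ≤ C g) ∧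
    (∀ f : Fin L → ℝ, (∀ g : Fin L → ℝ, C f ≤ C g) →
      (∀ y y' : Fin L,
        f y - f y' = Real.log (η y / π y) - Real.log (η y' / π y')) ∧
      {y : Fin L | ∀ y' : Fin L, f y' ≤ f y} =
        {y : Fin L | ∀ y' : Fin L, η y' / π y' ≤ η y / π y}) := by
  have : Nonempty (Fin L) := ⟨⟨0, by omega⟩⟩
  have hr : ∀ y, 0 < η y / π y := fun y => div_pos (hη y) (hπ y)
  set w : Fin L → ℝ := fun y => η y * (δ y / π y)
  have hw_eq : ∀ y, w y = δ y * (η y / π y) := fun y => mul_div_left_comm _ _ _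
  have hw : ∀ y, 0 < w y := fun y => hw_eq y ▸ mul_pos (hδ y) (hr y)
  have hlog_w : ∀ y, Real.log (w y) = Real.log (δ y) + Real.log (η y / π y) := fun y => by
    rw [hw_eq, Real.log_mul (hδ y).ne' (hr y).ne']
  have hC_eq : ∀ f, C f = softmaxCrossEntropy w fun y => Real.log (δ y) + f y := fun f => by
    have hmargin : ∀ y y', Real.exp (Real.log (δ y' / δ y)) * Real.exp (f y' - f y) =
        Real.exp ((Real.log (δ y') + f y') - (Real.log (δ y) + f y)) := fun y y' => by
      rw [← Real.exp_add, Real.log_div (hδ y').ne' (hδ y).ne']; ring_nf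
    simp only [hC, hmargin, log_one_add_sum_erase_exp_sub, softmaxCrossEntropy, w, mul_assoc]
  have hC_opt : C (fun y => Real.log (η y / π y)) =
      softmaxCrossEntropy w fun y => Real.log (w y) := by
    simp only [hC_eq, hlog_w]
  refine ⟨⟨_, fun g => by rw [hC_opt, hC_eq]; exact softmaxCrossEntropy_log_le hw _⟩,
    fun f hf => ?_⟩
  obtain ⟨c, hc⟩ := exists_eq_log_add_of_softmaxCrossEntropy_le hw
    (by rw [← hC_eq f, ← hC_opt]; exact hf _)
  have hdiff : ∀ y y', f y - f y' = Real.log (η y / π y) - Real.log (η y' / π y') :=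
    fun y y' => by linarith [hc y, hc y', hlog_w y, hlog_w y']
  refine ⟨hdiff, Set.ext fun y => forall_congr' fun y' => ?_⟩
  rw [← sub_nonneg, hdiff, sub_nonneg, Real.log_le_log_iff (hr y') (hr y)]

/-- Theorem 1: the pairwise margin loss with weights `α y = δ y / π y` and margins
`Δ_{y y'} = log (δ y' / δ y)` is (pointwise) Fisher consistent for the balanced error. -/
theorem pairwise_margin_loss_fisher_consistent
    (L : ℕ) (hL : 2 ≤ L)
    (π : Fin L → ℝ) (hπ : ∀ y, 0 < π y)
    (δ : Fin L → ℝ) (hδ : ∀ y, 0 < δ y)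
    (η : Fin L → ℝ) (hη : ∀ y, 0 < η y) (hsum : ∑ y : Fin L, η y = 1)
    (C : (Fin L → ℝ) → ℝ)
    (hC : ∀ f : Fin L → ℝ,
      C f = ∑ y : Fin L, η y * ((δ y / π y) *
        Real.log (1 + ∑ y' ∈ Finset.univ.erase y,
          Real.exp (Real.log (δ y' / δ y)) * Real.exp (f y' - f y)))) :
    (∃ f : Fin L → ℝ, ∀ g : Fin L → ℝ, C f ≤ C g) ∧
    (∀ f : Fin L → ℝ, (∀ g : Fin L → ℝ, C f ≤ C g) →
      (∀ y y' : Fin L,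
        f y - f y' = Real.log (η y / π y) - Real.log (η y' / π y')) ∧
      {y : Fin L | ∀ y' : Fin L, f y' ≤ f y} =
        {y : Fin L | ∀ y' : Fin L, η y' / π y' ≤ η y / π y}) :=
  pairwise_margin_loss_fisher_consistent_general L hL π hπ δ hδ η hη C hC
end

section
/- (Consistency of the logit adjusted loss.) Fix L ≥ 2, strictly positive class priors π_1,...,π_L, and conditional class-probabilities η ∈ ℝ^L with η_y > 0 for all y and Σ_y η_y = 1. Define C(f) = Σ_y η_y · log( 1 + Σ_{y'≠y} (π_{y'}/π_y)·exp(f_{y'} − f_y) ) for f ∈ ℝ^L. Then C attains its minimum, and every minimizer f* satisfies f*_y − f*_{y'} = log(η_y/π_y) − log(η_{y'}/π_{y'}) for all y, y'; in particular argmax_y f*_y = argmax_y η_y/π_y. -/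
/-!
With `q_f y = π y * exp (f y) / ∑ y', π y' * exp (f y')` the softmax of the adjusted logits
`f + log π`, each summand of `C f` is `-η y * log (q_f y)`, so `C f` is the cross-entropy of `η`
relative to `q_f`. By Gibbs' inequality it is at least the entropy of `η`, with equality exactly
when `q_f = η`, that is, when `f = log (η / π)` up to an additive constant.
-/

open Finset

section Gibbs

open Real

lemma mul_log_sub_mul_log_le_sub {a b : ℝ} (ha : 0 < a) (hb : 0 < b) :
    a * log b - a * log a ≤ b - a := by
  calc a * log b - a * log a = a * log (b / a) := by rw [log_div hb.ne' ha.ne']; ring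
    _ ≤ a * (b / a - 1) := by gcongr; exact log_le_sub_one_of_pos (div_pos hb ha)
    _ = b - a := by field_simp

lemma mul_log_sub_mul_log_lt_sub {a b : ℝ} (ha : 0 < a) (hb : 0 < b) (hba : b ≠ a) :
    a * log b - a * log a < b - a := by
  have hlt : log (b / a) < b / a - 1 :=
    log_lt_sub_one_of_pos (div_pos hb ha) (by rwa [Ne, div_eq_one_iff_eq ha.ne'])
  calc a * log b - a * log a = a * log (b / a) := by rw [log_div hb.ne' ha.ne']; ring
    _ < a * (b / a - 1) := by gcongr
    _ = b - a := by field_simp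

variable {ι : Type*} [Fintype ι] {p q : ι → ℝ}

theorem sum_mul_log_le_sum_mul_log_self (hp : ∀ i, 0 < p i) (hq : ∀ i, 0 < q i)
    (hsum : ∑ i, q i ≤ ∑ i, p i) :
    ∑ i, p i * log (q i) ≤ ∑ i, p i * log (p i) := by
  have h : ∑ i, (p i * log (q i) - p i * log (p i)) ≤ ∑ i, (q i - p i) :=
    sum_le_sum fun i _ => mul_log_sub_mul_log_le_sub (hp i) (hq i)
  rw [sum_sub_distrib, sum_sub_distrib] at h
  linarith

theorem sum_mul_log_lt_sum_mul_log_self (hp : ∀ i, 0 < p i) (hq : ∀ i, 0 < q i)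
    (hsum : ∑ i, q i ≤ ∑ i, p i) (hqp : q ≠ p) :
    ∑ i, p i * log (q i) < ∑ i, p i * log (p i) := by
  obtain ⟨j, hj⟩ := Function.ne_iff.mp hqp
  have h : ∑ i, (p i * log (q i) - p i * log (p i)) < ∑ i, (q i - p i) :=
    sum_lt_sum (fun i _ => mul_log_sub_mul_log_le_sub (hp i) (hq i))
      ⟨j, mem_univ j, mul_log_sub_mul_log_lt_sub (hp j) (hq j) hj⟩
  rw [sum_sub_distrib, sum_sub_distrib] at h
  linarith

end Gibbs

section AdjustedSoftmax

open Real

variable {ι : Type*} [Fintype ι] {w : ι → ℝ}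

/-- The softmax of the logit-adjusted scores `f y + log (w y)`. -/
noncomputable def adjustedSoftmax (w f : ι → ℝ) (y : ι) : ℝ :=
  w y * exp (f y) / ∑ y', w y' * exp (f y')

lemma sum_mul_exp_pos (hw : ∀ y, 0 < w y) (f : ι → ℝ) (y : ι) :
    0 < ∑ y', w y' * exp (f y') :=
  sum_pos (fun y' _ => mul_pos (hw y') (exp_pos _)) ⟨y, mem_univ y⟩

lemma adjustedSoftmax_pos (hw : ∀ y, 0 < w y) (f : ι → ℝ) (y : ι) :
    0 < adjustedSoftmax w f y :=
  div_pos (mul_pos (hw y) (exp_pos _)) (sum_mul_exp_pos hw f y)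

/-- The total mass is `1`, except for the empty index type where it is `0 / 0 = 0`. -/
lemma sum_adjustedSoftmax_le_one (w f : ι → ℝ) : ∑ y, adjustedSoftmax w f y ≤ 1 := by
  simp only [adjustedSoftmax, ← sum_div]
  exact div_self_le_one _

lemma log_one_add_sum_erase_eq_neg_log_adjustedSoftmax [DecidableEq ι] (hw : ∀ y, 0 < w y)
    (f : ι → ℝ) (y : ι) :
    log (1 + ∑ y' ∈ univ.erase y, (w y' / w y) * exp (f y' - f y)) =
      -log (adjustedSoftmax w f y) := by
  have hy : w y * exp (f y) ≠ 0 := (mul_pos (hw y) (exp_pos _)).ne'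
  have hratio : 1 + ∑ y' ∈ univ.erase y, (w y' / w y) * exp (f y' - f y) =
      (∑ y', w y' * exp (f y')) / (w y * exp (f y)) := by
    rw [eq_div_iff hy, add_mul, one_mul, sum_mul, ← add_sum_erase _ _ (mem_univ y)]
    congr 1
    refine sum_congr rfl fun y' _ => ?_
    have hwy := (hw y).ne'
    rw [exp_sub]
    field_simp
  rw [hratio, adjustedSoftmax, ← log_inv, inv_div]

lemma adjustedSoftmax_log_div {η : ι → ℝ} (hw : ∀ y, 0 < w y) (hη : ∀ y, 0 < η y)
    (hsum : ∑ y, η y = 1) :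
    adjustedSoftmax w (fun y => log (η y / w y)) = η := by
  have hterm : ∀ y, w y * exp (log (η y / w y)) = η y := fun y => by
    rw [exp_log (div_pos (hη y) (hw y)), mul_div_cancel₀ _ (hw y).ne']
  funext y
  simp only [adjustedSoftmax, hterm, hsum, div_one]

lemma eq_log_div_add_of_adjustedSoftmax_eq {η f : ι → ℝ} (hw : ∀ y, 0 < w y)
    (hη : ∀ y, 0 < η y) (hf : adjustedSoftmax w f = η) (y : ι) :
    f y = log (η y / w y) + log (∑ y', w y' * exp (f y')) := by
  have hS := (sum_mul_exp_pos hw f y).ne'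
  have hwy := (hw y).ne'
  have hexp : adjustedSoftmax w f y / w y * ∑ y', w y' * exp (f y') = exp (f y) := by
    rw [adjustedSoftmax]
    field_simp
  rw [← log_mul (div_pos (hη y) (hw y)).ne' hS, ← hf, hexp, log_exp]

end AdjustedSoftmax

theorem logit_adjusted_loss_consistent_general
    (L : ℕ)
    (π : Fin L → ℝ) (hπ : ∀ y, 0 < π y)
    (η : Fin L → ℝ) (hη : ∀ y, 0 < η y) (hsum : ∑ y : Fin L, η y = 1)
    (C : (Fin L → ℝ) → ℝ)
    (hC : ∀ f : Fin L → ℝ,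
      C f = ∑ y : Fin L, η y *
        Real.log (1 + ∑ y' ∈ Finset.univ.erase y,
          (π y' / π y) * Real.exp (f y' - f y))) :
    (∃ f : Fin L → ℝ, ∀ g : Fin L → ℝ, C f ≤ C g) ∧
    (∀ f : Fin L → ℝ, (∀ g : Fin L → ℝ, C f ≤ C g) →
      (∀ y y' : Fin L,
        f y - f y' = Real.log (η y / π y) - Real.log (η y' / π y')) ∧
      {y : Fin L | ∀ y' : Fin L, f y' ≤ f y} =
        {y : Fin L | ∀ y' : Fin L, η y' / π y' ≤ η y / π y}) := by
  have hCq : ∀ f, C f = -∑ y, η y * Real.log (adjustedSoftmax π f y) := fun f => by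
    simp only [hC, log_one_add_sum_erase_eq_neg_log_adjustedSoftmax hπ, mul_neg, sum_neg_distrib]
  have hmass : ∀ f, ∑ y, adjustedSoftmax π f y ≤ ∑ y, η y :=
    fun f => hsum ▸ sum_adjustedSoftmax_le_one π f
  set fstar : Fin L → ℝ := fun y => Real.log (η y / π y)
  have hCstar : C fstar = -∑ y, η y * Real.log (η y) := by
    rw [hCq, adjustedSoftmax_log_div hπ hη hsum]
  have hmin : ∀ g, C fstar ≤ C g := fun g => by
    rw [hCstar, hCq, neg_le_neg_iff]
    exact sum_mul_log_le_sum_mul_log_self hη (adjustedSoftmax_pos hπ g) (hmass g)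
  refine ⟨⟨fstar, hmin⟩, fun f hf => ?_⟩
  have hq : adjustedSoftmax π f = η := by
    by_contra hne
    refine (hf fstar).not_gt ?_
    rw [hCstar, hCq, neg_lt_neg_iff]
    exact sum_mul_log_lt_sum_mul_log_self hη (adjustedSoftmax_pos hπ f) (hmass f) hne
  have hf_eq := eq_log_div_add_of_adjustedSoftmax_eq hπ hη hq
  refine ⟨fun y y' => by rw [hf_eq y, hf_eq y']; ring, ?_⟩
  ext y
  refine forall_congr' fun y' => ?_
  rw [hf_eq y, hf_eq y', add_le_add_iff_right,
    Real.log_le_log_iff (div_pos (hη y') (hπ y')) (div_pos (hη y) (hπ y))]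

/-- Consistency of the logit adjusted softmax cross-entropy (τ = 1) for the balanced error. -/
theorem logit_adjusted_loss_consistent
    (L : ℕ) (hL : 2 ≤ L)
    (π : Fin L → ℝ) (hπ : ∀ y, 0 < π y)
    (η : Fin L → ℝ) (hη : ∀ y, 0 < η y) (hsum : ∑ y : Fin L, η y = 1)
    (C : (Fin L → ℝ) → ℝ)
    (hC : ∀ f : Fin L → ℝ,
      C f = ∑ y : Fin L, η y *
        Real.log (1 + ∑ y' ∈ Finset.univ.erase y,
          (π y' / π y) * Real.exp (f y' - f y))) :
    (∃ f : Fin L → ℝ, ∀ g : Fin L → ℝ, C f ≤ C g) ∧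
    (∀ f : Fin L → ℝ, (∀ g : Fin L → ℝ, C f ≤ C g) →
      (∀ y y' : Fin L,
        f y - f y' = Real.log (η y / π y) - Real.log (η y' / π y')) ∧
      {y : Fin L | ∀ y' : Fin L, f y' ≤ f y} =
        {y : Fin L | ∀ y' : Fin L, η y' / π y' ≤ η y / π y}) :=
  logit_adjusted_loss_consistent_general L π hπ η hη hsum C hC
end

section
/- (Consistency of the balanced loss.) Fix L ≥ 2, strictly positive class priors π_1,...,π_L, and conditional class-probabilities η ∈ ℝ^L with η_y > 0 for all y and Σ_y η_y = 1. Define C(f) = Σ_y (η_y/π_y) · log( 1 + Σ_{y'≠y} exp(f_{y'} − f_y) ) for f ∈ ℝ^L. Then C attains its minimum, and every minimizer f* satisfies f*_y − f*_{y'} = log(η_y/π_y) − log(η_{y'}/π_{y'}) for all y, y'; in particular argmax_y f*_y = argmax_y η_y/π_y. -/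
open Finset

/-- Weighted Jensen inequality for `Real.log` (non-strict). -/
lemma aux_jensen_log_le {L : ℕ} (hL : 0 < L) (w x : Fin L → ℝ)
    (hw : ∀ y, 0 < w y) (hx : ∀ y, 0 < x y) :
    ∑ y, w y * Real.log (x y) ≤
      (∑ y, w y) * Real.log ((∑ y, w y * x y) / (∑ y, w y)) := by
  haveI : NeZero L := ⟨hL.ne'⟩
  have hW : 0 < ∑ y, w y := Finset.sum_pos (fun y _ => hw y) Finset.univ_nonempty
  have h := (strictConcaveOn_log_Ioi.concaveOn).le_map_sum
    (t := Finset.univ) (w := fun y => w y / ∑ z, w z) (p := x)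
    (fun i _ => div_nonneg (hw i).le hW.le)
    (by rw [← Finset.sum_div]; field_simp)
    (fun i _ => hx i)
  simp only [smul_eq_mul] at h
  have h2 := mul_le_mul_of_nonneg_left h hW.le
  calc ∑ y, w y * Real.log (x y)
      = (∑ z, w z) * ∑ y, (w y / ∑ z, w z) * Real.log (x y) := by
        rw [Finset.mul_sum]; congr 1; funext y; field_simp
    _ ≤ (∑ z, w z) * Real.log (∑ y, (w y / ∑ z, w z) * x y) := h2
    _ = (∑ y, w y) * Real.log ((∑ y, w y * x y) / (∑ y, w y)) := by
        congr 2
        rw [Finset.sum_div]; congr 1; funext y; field_simp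

/-- Weighted Jensen inequality for `Real.log` (strict). -/
lemma aux_jensen_log_lt {L : ℕ} (hL : 0 < L) (w x : Fin L → ℝ)
    (hw : ∀ y, 0 < w y) (hx : ∀ y, 0 < x y)
    (hne : ∃ y y' : Fin L, x y ≠ x y') :
    ∑ y, w y * Real.log (x y) <
      (∑ y, w y) * Real.log ((∑ y, w y * x y) / (∑ y, w y)) := by
  haveI : NeZero L := ⟨hL.ne'⟩
  have hW : 0 < ∑ y, w y := Finset.sum_pos (fun y _ => hw y) Finset.univ_nonempty
  obtain ⟨a, b, hab⟩ := hne
  have h := strictConcaveOn_log_Ioi.lt_map_sum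
    (t := Finset.univ) (w := fun y => w y / ∑ z, w z) (p := x)
    (fun i _ => div_pos (hw i) hW)
    (by rw [← Finset.sum_div]; field_simp)
    (fun i _ => hx i)
    ⟨a, Finset.mem_univ a, b, Finset.mem_univ b, hab⟩
  simp only [smul_eq_mul] at h
  have h2 := mul_lt_mul_of_pos_left h hW
  calc ∑ y, w y * Real.log (x y)
      = (∑ z, w z) * ∑ y, (w y / ∑ z, w z) * Real.log (x y) := by
        rw [Finset.mul_sum]; congr 1; funext y; field_simp
    _ < (∑ z, w z) * Real.log (∑ y, (w y / ∑ z, w z) * x y) := h2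
    _ = (∑ y, w y) * Real.log ((∑ y, w y * x y) / (∑ y, w y)) := by
        congr 2
        rw [Finset.sum_div]; congr 1; funext y; field_simp

/-- Consistency of the balanced softmax cross-entropy for the balanced error. -/
theorem balanced_loss_consistent
    (L : ℕ) (hL : 2 ≤ L)
    (π : Fin L → ℝ) (hπ : ∀ y, 0 < π y)
    (η : Fin L → ℝ) (hη : ∀ y, 0 < η y) (hsum : ∑ y : Fin L, η y = 1)
    (C : (Fin L → ℝ) → ℝ)
    (hC : ∀ f : Fin L → ℝ,
      C f = ∑ y : Fin L, (η y / π y) *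
        Real.log (1 + ∑ y' ∈ Finset.univ.erase y, Real.exp (f y' - f y))) :
    (∃ f : Fin L → ℝ, ∀ g : Fin L → ℝ, C f ≤ C g) ∧
    (∀ f : Fin L → ℝ, (∀ g : Fin L → ℝ, C f ≤ C g) →
      (∀ y y' : Fin L,
        f y - f y' = Real.log (η y / π y) - Real.log (η y' / π y')) ∧
      {y : Fin L | ∀ y' : Fin L, f y' ≤ f y} =
        {y : Fin L | ∀ y' : Fin L, η y' / π y' ≤ η y / π y}) := by
  have hLpos : 0 < L := by omega
  haveI : NeZero L := ⟨hLpos.ne'⟩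
  set w : Fin L → ℝ := fun y => η y / π y with hwdef
  have hw : ∀ y, 0 < w y := fun y => div_pos (hη y) (hπ y)
  have hW : 0 < ∑ y, w y := Finset.sum_pos (fun y _ => hw y) Finset.univ_nonempty
  have hS : ∀ f : Fin L → ℝ, 0 < ∑ y, Real.exp (f y) :=
    fun f => Finset.sum_pos (fun y _ => Real.exp_pos _) Finset.univ_nonempty
  -- Rewrite C in log-sum-exp form
  have hCeq : ∀ f : Fin L → ℝ,
      C f = (∑ y, w y) * Real.log (∑ y, Real.exp (f y)) - ∑ y, w y * f y := by
    intro f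
    rw [hC f]
    have hterm : ∀ y : Fin L,
        Real.log (1 + ∑ y' ∈ Finset.univ.erase y, Real.exp (f y' - f y))
          = Real.log (∑ y', Real.exp (f y')) - f y := by
      intro y
      have h1 : (1 : ℝ) + ∑ y' ∈ Finset.univ.erase y, Real.exp (f y' - f y)
          = (∑ y', Real.exp (f y')) * Real.exp (-(f y)) := by
        have : ∀ y' : Fin L, Real.exp (f y' - f y)
            = Real.exp (f y') * Real.exp (-(f y)) := by
          intro y'; rw [← Real.exp_add]; ring_nf
        simp only [this]
        rw [← Finset.sum_mul]
        have h2 : (Real.exp (f y) + ∑ y' ∈ Finset.univ.erase y, Real.exp (f y'))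
            = ∑ y', Real.exp (f y') :=
          Finset.add_sum_erase _ (fun y' => Real.exp (f y')) (Finset.mem_univ y)
        rw [← h2]
        rw [add_mul]
        rw [← Real.exp_add]
        simp
      rw [h1, Real.log_mul (hS f).ne' (Real.exp_pos _).ne', Real.log_exp]
      ring
    simp only [hterm]
    rw [← hwdef]
    simp only [mul_sub]
    rw [Finset.sum_sub_distrib, ← Finset.sum_mul]
  -- the candidate minimizer
  set fstar : Fin L → ℝ := fun y => Real.log (w y) with hfstar
  have hsum_star : (∑ y, Real.exp (fstar y)) = ∑ y, w y := by
    apply Finset.sum_congr rfl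
    intro y _
    exact Real.exp_log (hw y)
  have hCstar : C fstar
      = (∑ y, w y) * Real.log (∑ y, w y) - ∑ y, w y * Real.log (w y) := by
    rw [hCeq, hsum_star]
  -- key inequality via Jensen
  have key : ∀ g : Fin L → ℝ, C fstar ≤ C g := by
    intro g
    rw [hCstar, hCeq g]
    have hx : ∀ y, 0 < Real.exp (g y) / w y :=
      fun y => div_pos (Real.exp_pos _) (hw y)
    have hj := aux_jensen_log_le hLpos w (fun y => Real.exp (g y) / w y) hw hx
    have e1 : ∀ y : Fin L, w y * (Real.exp (g y) / w y) = Real.exp (g y) := by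
      intro y; rw [mul_comm, div_mul_cancel₀ _ (hw y).ne']
    have e2 : ∀ y : Fin L, Real.log (Real.exp (g y) / w y)
        = g y - Real.log (w y) := by
      intro y; rw [Real.log_div (Real.exp_pos _).ne' (hw y).ne', Real.log_exp]
    simp only [e1, e2, mul_sub] at hj
    rw [Finset.sum_sub_distrib, Real.log_div (hS g).ne' hW.ne', mul_sub] at hj
    linarith
  refine ⟨⟨fstar, key⟩, ?_⟩
  intro f hf
  -- f is a minimizer; show the ratios exp (f y) / w y are all equal
  have heqratio : ∀ y y' : Fin L, Real.exp (f y) / w y = Real.exp (f y') / w y' := by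
    by_contra hcon
    push_neg at hcon
    obtain ⟨a, b, hab⟩ := hcon
    have hx : ∀ y, 0 < Real.exp (f y) / w y :=
      fun y => div_pos (Real.exp_pos _) (hw y)
    have hj := aux_jensen_log_lt hLpos w (fun y => Real.exp (f y) / w y) hw hx ⟨a, b, hab⟩
    have e1 : ∀ y : Fin L, w y * (Real.exp (f y) / w y) = Real.exp (f y) := by
      intro y; rw [mul_comm, div_mul_cancel₀ _ (hw y).ne']
    have e2 : ∀ y : Fin L, Real.log (Real.exp (f y) / w y)
        = f y - Real.log (w y) := by
      intro y; rw [Real.log_div (Real.exp_pos _).ne' (hw y).ne', Real.log_exp]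
    simp only [e1, e2, mul_sub] at hj
    rw [Finset.sum_sub_distrib, Real.log_div (hS f).ne' hW.ne', mul_sub] at hj
    have hlt : C fstar < C f := by
      rw [hCstar, hCeq f]; linarith
    exact absurd (hf fstar) (not_le.mpr hlt)
  have hdiff : ∀ y y' : Fin L, f y - f y' = Real.log (w y) - Real.log (w y') := by
    intro y y'
    have h := heqratio y y'
    have hcross : Real.exp (f y) * w y' = Real.exp (f y') * w y :=
      (div_eq_div_iff (hw y).ne' (hw y').ne').mp h
    have hexp : Real.exp (f y - f y') = w y / w y' := by
      rw [Real.exp_sub, div_eq_div_iff (Real.exp_pos _).ne' (hw y').ne']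
      linarith
    have := congrArg Real.log hexp
    rw [Real.log_exp, Real.log_div (hw y).ne' (hw y').ne'] at this
    exact this
  constructor
  · intro y y'
    exact hdiff y y'
  · ext y
    simp only [Set.mem_setOf_eq]
    constructor
    · intro h y'
      have := hdiff y y'
      have h2 : Real.log (w y') ≤ Real.log (w y) := by
        have := h y'; linarith [hdiff y y']
      exact (Real.log_le_log_iff (hw y') (hw y)).mp h2
    · intro h y'
      have h2 : Real.log (w y') ≤ Real.log (w y) :=
        Real.log_le_log (hw y') (h y')
      linarith [hdiff y y']
end

section
/- (Lemma 1, binary consistency.) Fix π ∈ (0,1). For every η ∈ (0,1) the conditional risk C_η is strictly convex and attains a unique minimizer f*(η) ∈ ℝ. Then the following are equivalent: (i) for every η ∈ (0,1), f*(η) > 0 if and only if η > π; (ii) (ω₊/ω₋)·σ(γ·δ₊)/σ(γ·δ₋) = (1 − π)/π, where σ(z) = 1/(1 + exp(−z)) is the standard sigmoid. -/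
open Set Filter Topology

/-! The derivative of `C_η` is `D_η f = (1 - η) ω₋ σ(γδ₋ + γf) - η ω₊ σ(γδ₊ - γf)`, which increases
strictly from `-η ω₊` to `(1 - η) ω₋`. Hence `C_η` is strictly convex and its unique minimiser is
the unique zero of `D_η`; that zero is positive iff `D_η 0 < 0`, i.e. iff `η` exceeds
`π₀ = ω₋ σ(γδ₋) / (ω₊ σ(γδ₊) + ω₋ σ(γδ₋))`. Consistency for `π` therefore means `π₀ = π`, which
rearranges to the ratio condition. -/

section StrictMonoDeriv

variable {f f' : ℝ → ℝ}

theorem strictConvexOn_univ_of_hasDerivAt_of_strictMono (hf : ∀ x, HasDerivAt f (f' x) x)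
    (hf' : StrictMono f') : StrictConvexOn ℝ univ f := by
  have hderiv : deriv f = f' := funext fun x => (hf x).deriv
  exact StrictMono.strictConvexOn_univ_of_deriv
    (continuous_iff_continuousAt.2 fun x => (hf x).continuousAt) (hderiv ▸ hf')

theorem isMinOn_univ_iff_of_hasDerivAt_of_strictMono (hf : ∀ x, HasDerivAt f (f' x) x)
    (hf' : StrictMono f') {x : ℝ} : IsMinOn f univ x ↔ f' x = 0 := by
  refine ⟨fun hmin => (hmin.isLocalMin univ_mem).hasDerivAt_eq_zero (hf x), fun hx => ?_⟩
  refine (strictConvexOn_univ_of_hasDerivAt_of_strictMono hf hf').convexOn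
    |>.isMinOn_of_rightDeriv_eq_zero (by simp) ?_
  rw [(hf x).hasDerivWithinAt.derivWithin (uniqueDiffWithinAt_Ioi x), hx]

/-- Existence comes from Darboux's theorem, so `f'` need not be continuous. -/
theorem existsUnique_isMinOn_univ_of_hasDerivAt_of_strictMono (hf : ∀ x, HasDerivAt f (f' x) x)
    (hf' : StrictMono f') {a b : ℝ} (ha : f' a < 0) (hb : 0 < f' b) :
    ∃! x, IsMinOn f univ x := by
  simp only [isMinOn_univ_iff_of_hasDerivAt_of_strictMono hf hf']
  have hab : a ≤ b := (hf'.lt_iff_lt.1 (ha.trans hb)).le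
  obtain ⟨x, -, hx⟩ :=
    exists_hasDerivWithinAt_eq_of_gt_of_lt hab (fun x _ => (hf x).hasDerivWithinAt) ha hb
  exact ⟨x, hx, fun y hy => hf'.injective (hy.trans hx.symm)⟩

end StrictMonoDeriv

theorem eq_iff_forall_mem_Ioo_lt_iff_lt {α : Type*} [LinearOrder α] [DenselyOrdered α]
    {lo hi a b : α} (ha : a ∈ Icc lo hi) (hb : b ∈ Icc lo hi) :
    a = b ↔ ∀ c ∈ Ioo lo hi, a < c ↔ b < c := by
  refine ⟨fun hab _ _ => hab ▸ Iff.rfl, fun h => le_antisymm (not_lt.1 fun hba => ?_)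
    (not_lt.1 fun hab => ?_)⟩
  · obtain ⟨c, hbc, hca⟩ := exists_between hba
    exact hca.not_gt ((h c ⟨hb.1.trans_lt hbc, hca.trans_le ha.2⟩).2 hbc)
  · obtain ⟨c, hac, hcb⟩ := exists_between hab
    exact hcb.not_gt ((h c ⟨ha.1.trans_lt hac, hcb.trans_le hb.2⟩).1 hac)

theorem div_eq_one_sub_div_iff_div_add_eq {K : Type*} [Field K] {p m t : K} (hm : m ≠ 0)
    (ht : t ≠ 0) (hpm : p + m ≠ 0) : p / m = (1 - t) / t ↔ m / (p + m) = t := by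
  rw [div_eq_div_iff hm ht, div_eq_iff hpm]
  constructor <;> intro h <;> linear_combination -h

open Real in
theorem Real.hasDerivAt_log_one_add_exp (x : ℝ) :
    HasDerivAt (fun x => log (1 + exp x)) (sigmoid x) x := by
  convert ((hasDerivAt_exp x).const_add 1).log (by positivity) using 1
  rw [sigmoid_def, exp_neg]
  field_simp
  ring

section MarginRisk

open Real

variable (ωp ωm γ δp δm : ℝ)

noncomputable def marginRisk (η f : ℝ) : ℝ :=
  η * ((ωp / γ) * log (1 + exp (γ * δp - γ * f))) +
    (1 - η) * ((ωm / γ) * log (1 + exp (γ * δm + γ * f)))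

noncomputable def marginRiskDeriv (η f : ℝ) : ℝ :=
  (1 - η) * ωm * sigmoid (γ * δm + γ * f) - η * ωp * sigmoid (γ * δp - γ * f)

noncomputable def marginThreshold : ℝ :=
  ωm * sigmoid (γ * δm) / (ωp * sigmoid (γ * δp) + ωm * sigmoid (γ * δm))

variable {ωp ωm γ}

theorem hasDerivAt_marginRisk (hγ : γ ≠ 0) (η f : ℝ) :
    HasDerivAt (marginRisk ωp ωm γ δp δm η) (marginRiskDeriv ωp ωm γ δp δm η f) f := by
  have hp := (hasDerivAt_log_one_add_exp _).comp f
    (((hasDerivAt_id f).const_mul γ).const_sub (γ * δp))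
  have hm := (hasDerivAt_log_one_add_exp _).comp f
    (((hasDerivAt_id f).const_mul γ).const_add (γ * δm))
  refine (((hp.const_mul (ωp / γ)).const_mul η).add
    ((hm.const_mul (ωm / γ)).const_mul (1 - η))).congr_deriv ?_
  simp only [marginRiskDeriv, id]
  field_simp
  ring

theorem strictMono_marginRiskDeriv (hωp : 0 < ωp) (hωm : 0 < ωm) (hγ : 0 < γ) {η : ℝ}
    (hη : η ∈ Ioo 0 1) : StrictMono (marginRiskDeriv ωp ωm γ δp δm η) := by
  intro x y hxy
  have hη0 : 0 < η := hη.1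
  have hη1 : 0 < 1 - η := sub_pos.2 hη.2
  simp only [marginRiskDeriv]
  gcongr

theorem tendsto_marginRiskDeriv_atTop (hγ : 0 < γ) (η : ℝ) :
    Tendsto (marginRiskDeriv ωp ωm γ δp δm η) atTop (𝓝 ((1 - η) * ωm)) := by
  have hlin : Tendsto (γ * ·) atTop atTop := tendsto_id.const_mul_atTop hγ
  have hm : Tendsto (fun f => γ * δm + γ * f) atTop atTop :=
    tendsto_atTop_add_const_left _ _ hlin
  have hp : Tendsto (fun f => γ * δp - γ * f) atTop atBot := by
    simpa only [sub_eq_add_neg, Function.comp_def] using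
      tendsto_atBot_add_const_left _ (γ * δp) (tendsto_neg_atTop_atBot.comp hlin)
  have h := ((tendsto_sigmoid_atTop.comp hm).const_mul ((1 - η) * ωm)).sub
    ((tendsto_sigmoid_atBot.comp hp).const_mul (η * ωp))
  rwa [mul_one, mul_zero, sub_zero] at h

theorem tendsto_marginRiskDeriv_atBot (hγ : 0 < γ) (η : ℝ) :
    Tendsto (marginRiskDeriv ωp ωm γ δp δm η) atBot (𝓝 (-(η * ωp))) := by
  have hlin : Tendsto (γ * ·) atBot atBot := tendsto_id.const_mul_atBot hγ
  have hm : Tendsto (fun f => γ * δm + γ * f) atBot atBot :=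
    tendsto_atBot_add_const_left _ _ hlin
  have hp : Tendsto (fun f => γ * δp - γ * f) atBot atTop := by
    simpa only [sub_eq_add_neg, Function.comp_def] using
      tendsto_atTop_add_const_left _ (γ * δp) (tendsto_neg_atBot_atTop.comp hlin)
  have h := ((tendsto_sigmoid_atBot.comp hm).const_mul ((1 - η) * ωm)).sub
    ((tendsto_sigmoid_atTop.comp hp).const_mul (η * ωp))
  rwa [mul_one, mul_zero, zero_sub] at h

theorem existsUnique_isMinOn_marginRisk (hωp : 0 < ωp) (hωm : 0 < ωm) (hγ : 0 < γ) {η : ℝ}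
    (hη : η ∈ Ioo 0 1) : ∃! f, IsMinOn (marginRisk ωp ωm γ δp δm η) univ f := by
  obtain ⟨a, ha⟩ := ((tendsto_marginRiskDeriv_atBot δp δm hγ η).eventually_lt_const
    (neg_neg_of_pos (mul_pos hη.1 hωp))).exists
  obtain ⟨b, hb⟩ := ((tendsto_marginRiskDeriv_atTop δp δm hγ η).eventually_const_lt
    (mul_pos (sub_pos.2 hη.2) hωm)).exists
  exact existsUnique_isMinOn_univ_of_hasDerivAt_of_strictMono (hasDerivAt_marginRisk δp δm hγ.ne' η)
    (strictMono_marginRiskDeriv δp δm hωp hωm hγ hη) ha hb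

theorem marginThreshold_mem_Ioo (hωp : 0 < ωp) (hωm : 0 < ωm) :
    marginThreshold ωp ωm γ δp δm ∈ Ioo 0 1 := by
  have hP := mul_pos hωp (sigmoid_pos (γ * δp))
  have hM := mul_pos hωm (sigmoid_pos (γ * δm))
  exact ⟨by unfold marginThreshold; positivity, (div_lt_one (by positivity)).2 (by linarith)⟩

theorem marginRiskDeriv_zero_neg_iff (hωp : 0 < ωp) (hωm : 0 < ωm) (η : ℝ) :
    marginRiskDeriv ωp ωm γ δp δm η 0 < 0 ↔ marginThreshold ωp ωm γ δp δm < η := by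
  have hP := mul_pos hωp (sigmoid_pos (γ * δp))
  have hM := mul_pos hωm (sigmoid_pos (γ * δm))
  rw [marginThreshold, div_lt_iff₀ (by positivity), marginRiskDeriv, mul_zero, add_zero, sub_zero]
  constructor <;> intro h <;> linarith

theorem pos_iff_marginThreshold_lt_of_isMinOn (hωp : 0 < ωp) (hωm : 0 < ωm) (hγ : 0 < γ)
    {η f : ℝ} (hη : η ∈ Ioo 0 1) (hf : IsMinOn (marginRisk ωp ωm γ δp δm η) univ f) :
    0 < f ↔ marginThreshold ωp ωm γ δp δm < η := by
  have hmono := strictMono_marginRiskDeriv δp δm hωp hωm hγ hη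
  have hf0 := (isMinOn_univ_iff_of_hasDerivAt_of_strictMono
    (hasDerivAt_marginRisk δp δm hγ.ne' η) hmono).1 hf
  rw [← marginRiskDeriv_zero_neg_iff δp δm hωp hωm, ← hf0, hmono.lt_iff_lt]

end MarginRisk

/-- Lemma 1 (binary consistency): for each `η ∈ (0,1)` the conditional risk of the binary
pairwise margin loss is strictly convex with a unique minimiser, and the minimiser is
positive exactly when `η > π` iff `(ω₊/ω₋)·σ(γδ₊)/σ(γδ₋) = (1-π)/π`. -/
theorem binary_pairwise_margin_consistency
    (ωp ωm γ : ℝ) (hωp : 0 < ωp) (hωm : 0 < ωm) (hγ : 0 < γ)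
    (δp δm : ℝ) (π : ℝ) (hπ : π ∈ Set.Ioo (0 : ℝ) 1)
    (C : ℝ → ℝ → ℝ)
    (hC : ∀ η f : ℝ, C η f =
      η * ((ωp / γ) * Real.log (1 + Real.exp (γ * δp - γ * f))) +
      (1 - η) * ((ωm / γ) * Real.log (1 + Real.exp (γ * δm + γ * f)))) :
    (∀ η ∈ Set.Ioo (0 : ℝ) 1,
      StrictConvexOn ℝ Set.univ (C η) ∧ ∃! f : ℝ, ∀ g : ℝ, C η f ≤ C η g) ∧
    ((∀ η ∈ Set.Ioo (0 : ℝ) 1, ∀ f : ℝ, (∀ g : ℝ, C η f ≤ C η g) → (0 < f ↔ π < η)) ↔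
      (ωp / ωm) * ((1 / (1 + Real.exp (-(γ * δp)))) / (1 / (1 + Real.exp (-(γ * δm))))) =
        (1 - π) / π) := by
  obtain rfl : C = marginRisk ωp ωm γ δp δm := funext₂ hC
  have hP := mul_pos hωp (Real.sigmoid_pos (γ * δp))
  have hM := mul_pos hωm (Real.sigmoid_pos (γ * δm))
  simp only [← isMinOn_univ_iff]
  refine ⟨fun η hη => ⟨strictConvexOn_univ_of_hasDerivAt_of_strictMono
    (hasDerivAt_marginRisk δp δm hγ.ne' η) (strictMono_marginRiskDeriv δp δm hωp hωm hγ hη),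
    existsUnique_isMinOn_marginRisk δp δm hωp hωm hγ hη⟩, ?_⟩
  rw [one_div, one_div, ← Real.sigmoid_def, ← Real.sigmoid_def, div_mul_div_comm,
    div_eq_one_sub_div_iff_div_add_eq hM.ne' hπ.1.ne' (by positivity), ← marginThreshold,
    eq_iff_forall_mem_Ioo_lt_iff_lt (Ioo_subset_Icc_self (marginThreshold_mem_Ioo δp δm hωp hωm))
      (Ioo_subset_Icc_self hπ)]
  refine forall₂_congr fun η hη => ?_
  have hsign {f} := pos_iff_marginThreshold_lt_of_isMinOn δp δm hωp hωm hγ hη (f := f)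
  obtain ⟨f, hf, -⟩ := existsUnique_isMinOn_marginRisk δp δm hωp hωm hγ hη
  exact ⟨fun h => (hsign hf).symm.trans (h f hf), fun h g hg => (hsign hg).trans h⟩
end

section
/- (Lemma 2, properness/invertibility.) Define r(f) = −ℓ'(+1, f)/ℓ'(−1, f) = (ω₊/ω₋)·[exp(γ·δ₊ − γ·f)/(1 + exp(γ·δ₊ − γ·f))]·[(1 + exp(γ·δ₋ + γ·f))/exp(γ·δ₋ + γ·f)] and Ψ⁻¹(f) = 1/(1 + r(f)). Then Ψ⁻¹ is a strictly increasing bijection from ℝ onto the open interval (0,1); consequently the binary pairwise margin loss is proper composite with invertible link Ψ. -/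
/-!
With `softplus x = log (1 + exp x)`, the log-odds `-log r` of the inverse link is
`g f = softplus (γ (f - δ₊)) - softplus (-γ (f + δ₋)) - log (ω₊ / ω₋)`, so `Ψ⁻¹ = σ ∘ g` for the
logistic sigmoid `σ`. Both softplus terms are monotone in `f` and one of them tends to `0` while the
other tends to `∞` at each end, so `g` is a continuous strictly increasing surjection `ℝ → ℝ`;
composing with the strictly increasing `σ : ℝ → (0, 1)`, which is onto, gives the claim.
-/

open Real Filter Topology

noncomputable def softplus (x : ℝ) : ℝ := log (1 + exp x)

lemma exp_softplus (x : ℝ) : exp (softplus x) = 1 + exp x :=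
  exp_log (by positivity)

lemma softplus_strictMono : StrictMono softplus := fun _ _ h ↦
  log_lt_log (by positivity) (by simpa using exp_lt_exp.2 h)

@[fun_prop]
lemma continuous_softplus : Continuous softplus :=
  (continuous_const.add continuous_exp).log fun x ↦ (add_pos one_pos (exp_pos x)).ne'

lemma le_softplus (x : ℝ) : x ≤ softplus x := by
  rw [← exp_le_exp, exp_softplus]
  linarith [exp_pos x]

lemma tendsto_softplus_atTop : Tendsto softplus atTop atTop :=
  tendsto_atTop_mono le_softplus tendsto_id

lemma tendsto_softplus_atBot : Tendsto softplus atBot (𝓝 0) := by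
  unfold softplus
  simpa using (tendsto_exp_atBot.const_add 1).log (by norm_num)

noncomputable def pairwiseMarginLogit (ωp ωm γ δp δm f : ℝ) : ℝ :=
  softplus (γ * (f - δp)) - softplus (-(γ * (f + δm))) - log (ωp / ωm)

lemma exp_neg_pairwiseMarginLogit {ωp ωm γ : ℝ} (δp δm : ℝ) (hωp : 0 < ωp) (hωm : 0 < ωm)
    (f : ℝ) :
    exp (-pairwiseMarginLogit ωp ωm γ δp δm f) = (ωp / ωm) *
      (exp (γ * δp - γ * f) / (1 + exp (γ * δp - γ * f))) *
      ((1 + exp (γ * δm + γ * f)) / exp (γ * δm + γ * f)) := by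
  have hp : exp (γ * (f - δp)) = (exp (γ * δp - γ * f))⁻¹ := by rw [← exp_neg]; ring_nf
  have hm : exp (-(γ * (f + δm))) = (exp (γ * δm + γ * f))⁻¹ := by rw [← exp_neg]; ring_nf
  rw [pairwiseMarginLogit, neg_sub, exp_sub, exp_sub, exp_softplus, exp_softplus,
    exp_log (div_pos hωp hωm), hp, hm]
  field_simp
  ring

section
variable (ωp ωm : ℝ) {γ : ℝ} (δp δm : ℝ)

lemma pairwiseMarginLogit_strictMono (hγ : 0 < γ) :
    StrictMono (pairwiseMarginLogit ωp ωm γ δp δm) := by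
  have h₁ : StrictMono fun f ↦ softplus (γ * (f - δp)) :=
    softplus_strictMono.comp fun _ _ h ↦ by gcongr
  have h₂ : StrictAnti fun f ↦ softplus (-(γ * (f + δm))) :=
    softplus_strictMono.comp_strictAnti fun _ _ h ↦ by gcongr
  unfold pairwiseMarginLogit
  simpa only [sub_eq_add_neg] using (h₁.add h₂.neg).add_const (-log (ωp / ωm))

lemma continuous_pairwiseMarginLogit : Continuous (pairwiseMarginLogit ωp ωm γ δp δm) := by
  unfold pairwiseMarginLogit; fun_prop

lemma tendsto_pairwiseMarginLogit_atTop (hγ : 0 < γ) :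
    Tendsto (pairwiseMarginLogit ωp ωm γ δp δm) atTop atTop := by
  have h₁ : Tendsto (fun f ↦ softplus (γ * (f - δp))) atTop atTop :=
    tendsto_softplus_atTop.comp ((tendsto_atTop_add_const_right _ _ tendsto_id).const_mul_atTop hγ)
  have h₂ : Tendsto (fun f ↦ softplus (-(γ * (f + δm)))) atTop (𝓝 0) :=
    tendsto_softplus_atBot.comp (tendsto_neg_atTop_atBot.comp
      ((tendsto_atTop_add_const_right _ _ tendsto_id).const_mul_atTop hγ))
  unfold pairwiseMarginLogit
  simpa only [sub_eq_add_neg, add_assoc] using h₁.atTop_add (h₂.neg.add_const (-log (ωp / ωm)))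

lemma tendsto_pairwiseMarginLogit_atBot (hγ : 0 < γ) :
    Tendsto (pairwiseMarginLogit ωp ωm γ δp δm) atBot atBot := by
  have h₁ : Tendsto (fun f ↦ softplus (γ * (f - δp))) atBot (𝓝 0) :=
    tendsto_softplus_atBot.comp ((tendsto_atBot_add_const_right _ _ tendsto_id).const_mul_atBot hγ)
  have h₂ : Tendsto (fun f ↦ softplus (-(γ * (f + δm)))) atBot atTop :=
    tendsto_softplus_atTop.comp (tendsto_neg_atBot_atTop.comp
      ((tendsto_atBot_add_const_right _ _ tendsto_id).const_mul_atBot hγ))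
  unfold pairwiseMarginLogit
  simpa only [sub_eq_add_neg, Function.comp_apply] using
    tendsto_atBot_add_const_right _ (-log (ωp / ωm)) (h₁.add_atBot (tendsto_neg_atTop_atBot.comp h₂))

lemma pairwiseMarginLogit_surjective (hγ : 0 < γ) :
    Function.Surjective (pairwiseMarginLogit ωp ωm γ δp δm) :=
  (continuous_pairwiseMarginLogit ωp ωm δp δm).surjective
    (tendsto_pairwiseMarginLogit_atTop ωp ωm δp δm hγ)
    (tendsto_pairwiseMarginLogit_atBot ωp ωm δp δm hγ)

end

/-- Lemma 2 (properness): the inverse link `Ψ⁻¹(f) = 1 / (1 + r f)` of the binary pairwise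
margin loss is a strictly increasing bijection from ℝ onto (0, 1). -/
theorem binary_pairwise_margin_inverse_link_bijective
    (ωp ωm γ : ℝ) (hωp : 0 < ωp) (hωm : 0 < ωm) (hγ : 0 < γ)
    (δp δm : ℝ)
    (r Ψinv : ℝ → ℝ)
    (hr : ∀ f : ℝ, r f = (ωp / ωm) *
      (Real.exp (γ * δp - γ * f) / (1 + Real.exp (γ * δp - γ * f))) *
      ((1 + Real.exp (γ * δm + γ * f)) / Real.exp (γ * δm + γ * f)))
    (hΨ : ∀ f : ℝ, Ψinv f = 1 / (1 + r f)) :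
    StrictMono Ψinv ∧ Set.range Ψinv = Set.Ioo (0 : ℝ) 1 := by
  have hΨ_sigmoid : Ψinv = sigmoid ∘ pairwiseMarginLogit ωp ωm γ δp δm := funext fun f ↦ by
    rw [Function.comp_apply, hΨ, hr, ← exp_neg_pairwiseMarginLogit δp δm hωp hωm, sigmoid_def,
      one_div]
  rw [hΨ_sigmoid, (pairwiseMarginLogit_surjective ωp ωm δp δm hγ).range_comp, range_sigmoid]
  exact ⟨sigmoid_strictMono.comp (pairwiseMarginLogit_strictMono ωp ωm δp δm hγ), rfl⟩
end

section
/- (Lemma 2, explicit link.) Let a = (ω₊/ω₋)·exp(γ·(δ₊ − δ₋)), b = exp(γ·δ₋), c = exp(γ·δ₊). For p ∈ (0,1) set q = (1 − p)/p. Then the unique f ∈ ℝ satisfying Ψ⁻¹(f) = p is f = (1/γ)·log( ( (a·b/q − c) + √( (a·b/q − c)² + 4·a/q ) ) / 2 ); equivalently, this f is the unique minimizer of the conditional risk C_p. -/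
/-!
Write `x = exp (γ f)`. The ratio `-ℓ'(+1, f) / ℓ'(-1, f)` is `a (1 + b x) / (x (x + c))`, so
`Ψ⁻¹(f) = p` becomes the quadratic `x² = (a b / q - c) x + a / q`, whose constant term is
positive; it therefore has exactly one positive root, the one in the formula. For the risk,
`∂_f C_p(f) = p ωₘ σ(γ δ₋ + γ f) (q - r f)` with `r` that ratio, so the derivative vanishes
exactly at the link point; it is strictly increasing, being a positive combination of
sigmoids, hence the link point is the unique global minimiser.
-/

open Real

namespace Real

lemma exp_div_one_add_exp (u : ℝ) : exp u / (1 + exp u) = sigmoid u := by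
  rw [sigmoid_def, exp_neg, div_eq_iff (by positivity)]
  field_simp
  ring

lemma hasDerivAt_log_one_add_exp_s12 (u : ℝ) :
    HasDerivAt (fun v => log (1 + exp v)) (sigmoid u) u := by
  rw [← exp_div_one_add_exp]
  exact ((hasDerivAt_exp u).const_add 1).log (by positivity)

end Real

lemma lt_of_hasDerivAt_of_strictMono {f f' : ℝ → ℝ} {x₀ y : ℝ}
    (hf : ∀ x, HasDerivAt f (f' x) x) (hf' : StrictMono f') (h₀ : f' x₀ = 0) (hy : y ≠ x₀) :
    f x₀ < f y := by
  have hcont (s : Set ℝ) : ContinuousOn f s := fun x _ => (hf x).continuousAt.continuousWithinAt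
  rcases hy.lt_or_gt with hy | hy
  · refine strictAntiOn_of_deriv_neg (convex_Iic x₀) (hcont _) ?_
      hy.le Set.self_mem_Iic hy
    intro x hx
    rw [interior_Iic] at hx
    rw [(hf x).deriv, ← h₀]
    exact hf' hx
  · refine strictMonoOn_of_deriv_pos (convex_Ici x₀) (hcont _) ?_
      Set.self_mem_Ici hy.le hy
    intro x hx
    rw [interior_Ici] at hx
    rw [(hf x).deriv, ← h₀]
    exact hf' hx

lemma one_div_one_add_eq_iff {r p : ℝ} (hr : 1 + r ≠ 0) (hp : p ≠ 0) :
    1 / (1 + r) = p ↔ r = (1 - p) / p := by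
  rw [div_eq_iff hr, eq_div_iff hp]
  constructor <;> intro h <;> linarith

lemma abs_lt_sqrt_sq_add {t k : ℝ} (hk : 0 < k) : |t| < √(t ^ 2 + k) := by
  rw [lt_sqrt (abs_nonneg t), sq_abs]
  linarith

lemma add_sqrt_sq_add_four_mul_pos (t : ℝ) {k : ℝ} (hk : 0 < k) : 0 < t + √(t ^ 2 + 4 * k) := by
  linarith [neg_abs_le t, abs_lt_sqrt_sq_add (t := t) (by positivity : 0 < 4 * k)]

lemma sq_eq_mul_add_iff_of_pos {t k x : ℝ} (hk : 0 < k) (hx : 0 < x) :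
    x ^ 2 = t * x + k ↔ x = (t + √(t ^ 2 + 4 * k)) / 2 := by
  set s := √(t ^ 2 + 4 * k)
  have hs : s ^ 2 = t ^ 2 + 4 * k := sq_sqrt (by positivity)
  have hts : t < s := (le_abs_self t).trans_lt (abs_lt_sqrt_sq_add (by positivity))
  have hfactor : x ^ 2 - (t * x + k) = (x - (t + s) / 2) * (x + (s - t) / 2) := by
    linear_combination hs / 4
  rw [← sub_eq_zero, hfactor, mul_eq_zero, sub_eq_zero, or_iff_left]
  linarith

lemma div_mul_add_eq_iff_sq_eq {a b c q x : ℝ} (hq : q ≠ 0) (hx : x * (x + c) ≠ 0) :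
    a * (1 + b * x) / (x * (x + c)) = q ↔ x ^ 2 = (a * b / q - c) * x + a / q := by
  rw [div_eq_iff hx]
  constructor <;> intro h
  · field_simp
    linear_combination -h
  · field_simp at h
    linear_combination -h

lemma exp_mul_eq_iff_eq_div_mul_log {γ f x : ℝ} (hγ : γ ≠ 0) (hx : 0 < x) :
    exp (γ * f) = x ↔ f = 1 / γ * log x := by
  rw [← exp_log hx, exp_eq_exp, log_exp, one_div, ← div_eq_inv_mul, eq_div_iff hγ, mul_comm]

section PairwiseMarginLoss

variable (ωp ωm γ δp δm : ℝ)

noncomputable def pairwiseMarginRisk (η f : ℝ) : ℝ :=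
  η * ((ωp / γ) * log (1 + exp (γ * δp - γ * f))) +
    (1 - η) * ((ωm / γ) * log (1 + exp (γ * δm + γ * f)))

noncomputable def pairwiseMarginRiskDeriv (η f : ℝ) : ℝ :=
  -(η * ωp) * sigmoid (γ * δp - γ * f) + (1 - η) * ωm * sigmoid (γ * δm + γ * f)

/-- The ratio `-ℓ'(+1, f) / ℓ'(-1, f)`, so that `Ψ⁻¹(f) = 1 / (1 + r f)`. -/
noncomputable def pairwiseMarginLinkRatio (f : ℝ) : ℝ :=
  ωp * sigmoid (γ * δp - γ * f) / (ωm * sigmoid (γ * δm + γ * f))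

lemma hasDerivAt_pairwiseMarginRisk (hγ : γ ≠ 0) (η f : ℝ) :
    HasDerivAt (pairwiseMarginRisk ωp ωm γ δp δm η)
      (pairwiseMarginRiskDeriv ωp ωm γ δp δm η f) f := by
  have hp := (hasDerivAt_log_one_add_exp_s12 (γ * δp - γ * f)).comp f
    (((hasDerivAt_id' f).const_mul γ).const_sub (γ * δp))
  have hm := (hasDerivAt_log_one_add_exp_s12 (γ * δm + γ * f)).comp f
    (((hasDerivAt_id' f).const_mul γ).const_add (γ * δm))
  refine (((hp.const_mul (ωp / γ)).const_mul η).add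
    ((hm.const_mul (ωm / γ)).const_mul (1 - η))).congr_deriv ?_
  simp only [pairwiseMarginRiskDeriv]
  field_simp

variable {ωp ωm γ}

lemma pairwiseMarginLinkRatio_pos (hωp : 0 < ωp) (hωm : 0 < ωm) (f : ℝ) :
    0 < pairwiseMarginLinkRatio ωp ωm γ δp δm f :=
  div_pos (mul_pos hωp (sigmoid_pos _)) (mul_pos hωm (sigmoid_pos _))

lemma pairwiseMarginRiskDeriv_strictMono (hωp : 0 < ωp) (hωm : 0 < ωm) (hγ : 0 < γ) {η : ℝ}
    (hη : η ∈ Set.Ioo (0 : ℝ) 1) :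
    StrictMono (pairwiseMarginRiskDeriv ωp ωm γ δp δm η) := by
  intro f g hfg
  have hγfg : γ * f < γ * g := mul_lt_mul_of_pos_left hfg hγ
  have hp := sigmoid_lt (show γ * δp - γ * g < γ * δp - γ * f by linarith)
  have hm := sigmoid_lt (show γ * δm + γ * f < γ * δm + γ * g by linarith)
  simp only [pairwiseMarginRiskDeriv]
  nlinarith [mul_pos hη.1 hωp, mul_pos (sub_pos.2 hη.2) hωm]

lemma pairwiseMarginRiskDeriv_eq (hωm : ωm ≠ 0) {η : ℝ} (hη : η ≠ 0) (f : ℝ) :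
    pairwiseMarginRiskDeriv ωp ωm γ δp δm η f = η * ωm * sigmoid (γ * δm + γ * f) *
      ((1 - η) / η - pairwiseMarginLinkRatio ωp ωm γ δp δm f) := by
  simp only [pairwiseMarginRiskDeriv, pairwiseMarginLinkRatio]
  have := (sigmoid_pos (γ * δm + γ * f)).ne'
  generalize sigmoid (γ * δm + γ * f) = v at *
  field_simp
  ring

lemma pairwiseMarginLinkRatio_eq {a b c : ℝ} (ha : a = (ωp / ωm) * exp (γ * (δp - δm)))
    (hb : b = exp (γ * δm)) (hc : c = exp (γ * δp)) (f : ℝ) :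
    pairwiseMarginLinkRatio ωp ωm γ δp δm f =
      a * (1 + b * exp (γ * f)) / (exp (γ * f) * (exp (γ * f) + c)) := by
  have hexp_p : exp (-(γ * δp - γ * f)) = exp (γ * f) / c := by rw [hc, ← exp_sub]; ring_nf
  have hexp_m : exp (-(γ * δm + γ * f)) = 1 / (b * exp (γ * f)) := by
    rw [hb, ← exp_add, one_div, ← exp_neg]
  have hexp_a : exp (γ * (δp - δm)) = c / b := by rw [hc, hb, ← exp_sub]; ring_nf
  have : 0 < exp (γ * f) := exp_pos _
  have : 0 < b := hb ▸ exp_pos _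
  have : 0 < c := hc ▸ exp_pos _
  simp only [pairwiseMarginLinkRatio, sigmoid_def, hexp_p, hexp_m, ha, hexp_a]
  field_simp
  ring

end PairwiseMarginLoss

/-- Lemma 2 (explicit link): the unique `f` with `Ψ⁻¹(f) = p` is given by the explicit
formula, and it is the unique minimiser of the conditional risk `C p`. -/
theorem binary_pairwise_margin_explicit_link
    (ωp ωm γ : ℝ) (hωp : 0 < ωp) (hωm : 0 < ωm) (hγ : 0 < γ)
    (δp δm : ℝ)
    (a b c : ℝ)
    (ha : a = (ωp / ωm) * Real.exp (γ * (δp - δm)))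
    (hb : b = Real.exp (γ * δm)) (hc : c = Real.exp (γ * δp))
    (r Ψinv : ℝ → ℝ)
    (hr : ∀ f : ℝ, r f = (ωp / ωm) *
      (Real.exp (γ * δp - γ * f) / (1 + Real.exp (γ * δp - γ * f))) *
      ((1 + Real.exp (γ * δm + γ * f)) / Real.exp (γ * δm + γ * f)))
    (hΨ : ∀ f : ℝ, Ψinv f = 1 / (1 + r f))
    (C : ℝ → ℝ → ℝ)
    (hC : ∀ η f : ℝ, C η f =
      η * ((ωp / γ) * Real.log (1 + Real.exp (γ * δp - γ * f))) +
      (1 - η) * ((ωm / γ) * Real.log (1 + Real.exp (γ * δm + γ * f))))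
    (p : ℝ) (hp : p ∈ Set.Ioo (0 : ℝ) 1)
    (q : ℝ) (hqdef : q = (1 - p) / p)
    (f₀ : ℝ)
    (hf₀ : f₀ = (1 / γ) * Real.log
      (((a * b / q - c) + Real.sqrt ((a * b / q - c) ^ 2 + 4 * a / q)) / 2)) :
    (Ψinv f₀ = p ∧ ∀ f : ℝ, Ψinv f = p → f = f₀) ∧
    ((∀ g : ℝ, C p f₀ ≤ C p g) ∧ ∀ f : ℝ, (∀ g : ℝ, C p f ≤ C p g) → f = f₀) := by
  obtain rfl : r = pairwiseMarginLinkRatio ωp ωm γ δp δm := funext fun f => by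
    rw [hr, ← inv_div (exp (γ * δm + γ * f)), exp_div_one_add_exp, exp_div_one_add_exp,
      pairwiseMarginLinkRatio]
    ring
  obtain rfl : C = pairwiseMarginRisk ωp ωm γ δp δm := funext₂ hC
  have hq : 0 < q := hqdef ▸ div_pos (sub_pos.2 hp.2) hp.1
  have ha0 : 0 < a := ha ▸ by positivity
  have hc0 : 0 < c := hc ▸ exp_pos _
  have hlink : ∀ f, pairwiseMarginLinkRatio ωp ωm γ δp δm f = q ↔ f = f₀ := fun f => by
    rw [pairwiseMarginLinkRatio_eq δp δm ha hb hc, div_mul_add_eq_iff_sq_eq hq.ne' (by positivity),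
      sq_eq_mul_add_iff_of_pos (by positivity) (exp_pos _),
      exp_mul_eq_iff_eq_div_mul_log hγ.ne'
        (half_pos (add_sqrt_sq_add_four_mul_pos _ (by positivity))), hf₀, mul_div_assoc 4 a q]
  have hΨp : ∀ f, Ψinv f = p ↔ f = f₀ := fun f => by
    rw [hΨ, one_div_one_add_eq_iff
      (by linarith [pairwiseMarginLinkRatio_pos (γ := γ) δp δm hωp hωm f]) hp.1.ne', ← hqdef, hlink]
  have hcrit : pairwiseMarginRiskDeriv ωp ωm γ δp δm p f₀ = 0 := by
    rw [pairwiseMarginRiskDeriv_eq δp δm hωm.ne' hp.1.ne', ← hqdef, (hlink f₀).2 rfl, sub_self, mul_zero]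
  have hmin : ∀ g ≠ f₀,
      pairwiseMarginRisk ωp ωm γ δp δm p f₀ < pairwiseMarginRisk ωp ωm γ δp δm p g := fun g =>
    lt_of_hasDerivAt_of_strictMono (hasDerivAt_pairwiseMarginRisk ωp ωm γ δp δm hγ.ne' p)
      (pairwiseMarginRiskDeriv_strictMono δp δm hωp hωm hγ hp) hcrit
  refine ⟨⟨(hΨp f₀).2 rfl, fun f => (hΨp f).1⟩, fun g => ?_, fun f hf => by_contra fun hf₀' => ?_⟩
  · rcases eq_or_ne g f₀ with rfl | hg
    · exact le_rfl
    · exact (hmin g hg).le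
  · exact (hmin f hf₀').not_ge (hf f₀)
end

section
/- For every η ∈ [0,1], the infimum over f ∈ ℝ of L(η, f) equals min( L(η, δ₊), L(η, −δ₋) ); that is, the conditional risk of the weighted variable-margin hinge loss is minimized at f = δ₊ or at f = −δ₋. Moreover L(η, δ₊) = (1 − η)·ω₋·(δ₋ + δ₊) and L(η, −δ₋) = η·ω₊·(δ₊ + δ₋). -/
/-- The conditional risk of the weighted variable-margin hinge loss is minimised at
`f = δ₊` or `f = −δ₋`, with the stated values. -/
theorem hinge_conditional_risk_min
    (ωp ωm δp δm : ℝ) (hωp : 0 < ωp) (hωm : 0 < ωm)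
    (hδp : 0 ≤ δp) (hδm : 0 ≤ δm) (hδ : 0 < δp + δm)
    (L : ℝ → ℝ → ℝ)
    (hL : ∀ η f : ℝ, L η f = η * (ωp * max (δp - f) 0) + (1 - η) * (ωm * max (δm + f) 0)) :
    ∀ η ∈ Set.Icc (0 : ℝ) 1,
      (⨅ f : ℝ, L η f) = min (L η δp) (L η (-δm)) ∧
      L η δp = (1 - η) * ωm * (δm + δp) ∧
      L η (-δm) = η * ωp * (δp + δm) := by
  intro η hη
  obtain ⟨hη0, hη1⟩ := hη
  have hA : 0 ≤ η * ωp := mul_nonneg hη0 hωp.le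
  have hB : 0 ≤ (1 - η) * ωm := mul_nonneg (by linarith) hωm.le
  have hLp : L η δp = (1 - η) * ωm * (δm + δp) := by
    rw [hL, sub_self, max_self, max_eq_left (by linarith)]; ring
  have hLm : L η (-δm) = η * ωp * (δp + δm) := by
    rw [hL, show δp - -δm = δp + δm by ring, show δm + -δm = 0 by ring,
      max_self, max_eq_left (by linarith)]; ring
  have key : ∀ f, min (L η δp) (L η (-δm)) ≤ L η f := by
    intro f
    rw [hL η f, hLp, hLm]
    rcases le_total f (-δm) with h | h
    · refine le_trans (min_le_right _ _) ?_
      have h1 : max (δp - f) 0 = δp - f := max_eq_left (by linarith)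
      have h2 : (0:ℝ) ≤ max (δm + f) 0 := le_max_right _ _
      rw [h1]
      nlinarith [mul_nonneg hB h2, mul_nonneg hA (show (0:ℝ) ≤ δp - f - (δp + δm) by linarith)]
    · rcases le_total δp f with h' | h'
      · refine le_trans (min_le_left _ _) ?_
        have h2 : max (δm + f) 0 = δm + f := max_eq_left (by linarith)
        have h1 : (0:ℝ) ≤ max (δp - f) 0 := le_max_right _ _
        rw [h2]
        nlinarith [mul_nonneg hA h1, mul_nonneg hB (show (0:ℝ) ≤ δm + f - (δm + δp) by linarith)]
      · have h1 : max (δp - f) 0 = δp - f := max_eq_left (by linarith)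
        have h2 : max (δm + f) 0 = δm + f := max_eq_left (by linarith)
        rw [h1, h2]
        rcases le_total (η * ωp) ((1 - η) * ωm) with hc | hc
        · refine le_trans (min_le_right _ _) ?_
          nlinarith [mul_nonneg (sub_nonneg.2 hc) (show (0:ℝ) ≤ f + δm by linarith)]
        · refine le_trans (min_le_left _ _) ?_
          nlinarith [mul_nonneg (sub_nonneg.2 hc) (show (0:ℝ) ≤ δp - f by linarith)]
  have hbdd : BddBelow (Set.range fun f => L η f) := by
    refine ⟨min (L η δp) (L η (-δm)), ?_⟩
    rintro x ⟨f, rfl⟩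
    exact key f
  refine ⟨le_antisymm ?_ (le_ciInf key), hLp, hLm⟩
  rcases le_total (L η δp) (L η (-δm)) with h | h
  · rw [min_eq_left h]; exact ciInf_le hbdd δp
  · rw [min_eq_right h]; exact ciInf_le hbdd (-δm)
end

section
/- (Consistency of the cost-sensitive hinge loss.) Let c ∈ (0,1). The equivalence 'for every η ∈ (0,1), L(η, δ₊) < L(η, −δ₋) if and only if η > c' holds if and only if ω₊/ω₋ = (1 − c)/c. In particular, the weighted variable-margin hinge loss is consistent for the cost-sensitive classification problem with cost c (predicting positive exactly when η > c) if and only if ω₊/ω₋ = (1 − c)/c, regardless of the values of the margins δ₊, δ₋. -/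
/-!
At the two margins `f = δ₊` and `f = -δ₋` one of the two hinge terms vanishes and the other
equals `δ₊ + δ₋ > 0` times its weight, so `L(η, δ₊) < L(η, -δ₋)` reduces to
`(1 - η) ω₋ < η ω₊`, i.e. to `η > ω₋ / (ω₊ + ω₋)`. On `(0, 1)` this threshold test agrees with
`η > c` exactly when `ω₋ / (ω₊ + ω₋) = c`, which rearranges to `ω₊ / ω₋ = (1 - c) / c`.
-/

def weightedHingeRisk (ωp ωm δp δm η f : ℝ) : ℝ :=
  η * (ωp * max (δp - f) 0) + (1 - η) * (ωm * max (δm + f) 0)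

section WeightedHingeRisk

variable {ωp ωm δp δm : ℝ}

theorem weightedHingeRisk_posMargin (hδ : 0 < δp + δm) (η : ℝ) :
    weightedHingeRisk ωp ωm δp δm η δp = (1 - η) * ωm * (δp + δm) := by
  rw [weightedHingeRisk, sub_self, max_self, add_comm δm, max_eq_left hδ.le]
  ring

theorem weightedHingeRisk_negMargin (hδ : 0 < δp + δm) (η : ℝ) :
    weightedHingeRisk ωp ωm δp δm η (-δm) = η * ωp * (δp + δm) := by
  rw [weightedHingeRisk, sub_neg_eq_add, max_eq_left hδ.le, add_neg_cancel, max_self]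
  ring

theorem weightedHingeRisk_posMargin_lt_negMargin_iff (hδ : 0 < δp + δm) (η : ℝ) :
    weightedHingeRisk ωp ωm δp δm η δp < weightedHingeRisk ωp ωm δp δm η (-δm) ↔
      (1 - η) * ωm < η * ωp := by
  rw [weightedHingeRisk_posMargin hδ, weightedHingeRisk_negMargin hδ]
  exact mul_lt_mul_iff_left₀ hδ

end WeightedHingeRisk

section Threshold

variable {K : Type*} [Field K] [LinearOrder K] [IsStrictOrderedRing K]

theorem one_sub_mul_lt_mul_iff_div_add_lt {a b η : K} (hab : 0 < a + b) :
    (1 - η) * b < η * a ↔ b / (a + b) < η := by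
  rw [div_lt_iff₀ hab]
  constructor <;> intro h <;> linarith

theorem forall_mem_Ioo_lt_iff_lt_iff_eq {t c : K} (hc : c ∈ Set.Ioo (0 : K) 1) :
    (∀ η ∈ Set.Ioo (0 : K) 1, (t < η ↔ c < η)) ↔ t = c := by
  refine ⟨fun h => ?_, fun h _ _ => h ▸ Iff.rfl⟩
  rcases lt_trichotomy t c with htc | htc | htc
  · exact absurd ((h c hc).1 htc) (lt_irrefl c)
  · exact htc
  · obtain ⟨η, hcη, hη⟩ := exists_between (lt_min htc hc.2)
    have hηt : ¬t < η := not_lt.2 (hη.le.trans (min_le_left t 1))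
    exact absurd ((h η ⟨hc.1.trans hcη, hη.trans_le (min_le_right t 1)⟩).2 hcη) hηt

theorem div_add_eq_iff_div_eq_one_sub_div {a b c : K} (hb : b ≠ 0) (hab : a + b ≠ 0)
    (hc : c ≠ 0) : b / (a + b) = c ↔ a / b = (1 - c) / c := by
  rw [div_eq_iff hab, div_eq_div_iff hb hc]
  constructor <;> intro h <;> linarith

end Threshold

theorem cost_sensitive_hinge_consistency_general
    (ωp ωm δp δm : ℝ) (hωp : 0 < ωp) (hωm : 0 < ωm)
    (hδ : 0 < δp + δm)
    (L : ℝ → ℝ → ℝ)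
    (hL : ∀ η f : ℝ, L η f = η * (ωp * max (δp - f) 0) + (1 - η) * (ωm * max (δm + f) 0))
    (c : ℝ) (hc : c ∈ Set.Ioo (0 : ℝ) 1) :
    (∀ η ∈ Set.Ioo (0 : ℝ) 1, (L η δp < L η (-δm) ↔ c < η)) ↔ ωp / ωm = (1 - c) / c := by
  have hsum : 0 < ωp + ωm := add_pos hωp hωm
  have hthreshold (η : ℝ) : L η δp < L η (-δm) ↔ ωm / (ωp + ωm) < η := by
    rw [hL, hL, ← one_sub_mul_lt_mul_iff_div_add_lt hsum]
    exact weightedHingeRisk_posMargin_lt_negMargin_iff hδ η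
  simp_rw [hthreshold]
  rw [forall_mem_Ioo_lt_iff_lt_iff_eq hc,
    div_add_eq_iff_div_eq_one_sub_div hωm.ne' hsum.ne' hc.1.ne']

/-- Consistency of the cost-sensitive hinge loss: the weighted variable-margin hinge loss
is consistent for cost `c` iff `ω₊/ω₋ = (1 − c)/c`, regardless of the margins. -/
theorem cost_sensitive_hinge_consistency
    (ωp ωm δp δm : ℝ) (hωp : 0 < ωp) (hωm : 0 < ωm)
    (hδp : 0 ≤ δp) (hδm : 0 ≤ δm) (hδ : 0 < δp + δm)
    (L : ℝ → ℝ → ℝ)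
    (hL : ∀ η f : ℝ, L η f = η * (ωp * max (δp - f) 0) + (1 - η) * (ωm * max (δm + f) 0))
    (c : ℝ) (hc : c ∈ Set.Ioo (0 : ℝ) 1) :
    (∀ η ∈ Set.Ioo (0 : ℝ) 1, (L η δp < L η (-δm) ↔ c < η)) ↔ ωp / ωm = (1 - c) / c :=
  cost_sensitive_hinge_consistency_general ωp ωm δp δm hωp hωm hδ L hL c hc
end
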